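/- Suppose f is a density symmetric about μ (f(x) = f(2μ − x) for all x), s = nm, d_j = {(j-1)m+1,…,jm}, and the doubly stochastic misplacement matrix α satisfies α_{j,h} = α_{n-j+1, n-h+1} for all j,h. Define f_{[d_j]}(x) = (1/m) Σ_{h=1}^n Σ_{u∈d_h} α_{j,h} f_{(u:s)}(x). Then f_{[d_j]}(x) = f_{[d_{n-j+1}]}(2μ − x) for all x and all j = 1,…,n. -/

import Mathlib

/-!
Reflecting `x ↦ 2μ₀ - x` turns the cdf `F` into `1 - F`, so the density of the `u`-th of `s`
order statistics at `2μ₀ - x` is the density of the `(s + 1 - u)`-th one at `x`. The map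
`u ↦ s + 1 - u` carries the block `d_h` onto `d_{n-h+1}`; together with the symmetry of `α` this
turns the sum defining `f_{[d_j]}` term by term into the one defining `f_{[d_{n-j+1}]}`.
-/

open Finset MeasureTheory Set

theorem Finset.sum_Icc_reflect {M : Type*} [AddCommMonoid M] (f : ℕ → M) {a b N : ℕ}
    (hb : b ≤ N) : ∑ j ∈ Icc a b, f (N + 1 - j) = ∑ j ∈ Icc (N + 1 - b) (N + 1 - a), f j := by
  refine sum_nbij' (fun j ↦ N + 1 - j) (fun j ↦ N + 1 - j) ?_ ?_ ?_ ?_ fun _ _ ↦ rfl <;>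
    intro j hj <;> simp only [Finset.mem_Icc] at hj ⊢ <;> omega

theorem Fin.mul_eq_rev_mul_add_succ_mul {n : ℕ} (h : Fin n) (m : ℕ) :
    n * m = (h.rev : ℕ) * m + ((h : ℕ) + 1) * m := by
  rw [← add_mul, Fin.val_rev]
  congr 1
  omega

theorem integral_Iic_comp_sub_left {E : Type*} [NormedAddCommGroup E] [NormedSpace ℝ E]
    (f : ℝ → E) (c x : ℝ) : ∫ t in Iic (c - x), f (c - t) = ∫ t in Ici x, f t := by
  rw [← preimage_const_sub_Ici]
  exact (Measure.measurePreserving_sub_left volume c).setIntegral_preimage_emb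
    (MeasurableEquiv.subLeft c).measurableEmbedding f _

theorem integral_Iic_sub_left_of_symmetric {f : ℝ → ℝ} (hf : Integrable f) {c : ℝ}
    (hsym : ∀ x, f (c - x) = f x) (x : ℝ) :
    ∫ t in Iic (c - x), f t = (∫ t, f t) - ∫ t in Iic x, f t := by
  calc ∫ t in Iic (c - x), f t = ∫ t in Iic (c - x), f (c - t) := by simp only [hsym]
    _ = ∫ t in Ioi x, f t := by rw [integral_Iic_comp_sub_left, integral_Ici_eq_integral_Ioi]
    _ = (∫ t, f t) - ∫ t in Iic x, f t := by
      rw [← intervalIntegral.integral_Iic_add_Ioi hf.integrableOn hf.integrableOn,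
        add_sub_cancel_left]

/-- `f_{(u:s)}`, the density of the `u`-th smallest of `s` i.i.d. draws from density `f`
with cdf `F`. -/
noncomputable def orderStatDensity (f F : ℝ → ℝ) (s u : ℕ) (x : ℝ) : ℝ :=
  (s : ℝ) * ((s - 1).choose (u - 1) : ℝ) * F x ^ (u - 1) * (1 - F x) ^ (s - u) * f x

theorem orderStatDensity_reflect {f F : ℝ → ℝ} {c : ℝ} (hf : ∀ x, f (c - x) = f x)
    (hF : ∀ x, F (c - x) = 1 - F x) {s u : ℕ} (hu : 1 ≤ u) (hus : u ≤ s) (x : ℝ) :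
    orderStatDensity f F s u (c - x) = orderStatDensity f F s (s + 1 - u) x := by
  have hchoose : (s - 1).choose (s + 1 - u - 1) = (s - 1).choose (u - 1) := by
    rw [show s + 1 - u - 1 = s - 1 - (u - 1) by omega, Nat.choose_symm (by omega)]
  rw [orderStatDensity, orderStatDensity, hchoose, hf, hF, sub_sub_cancel,
    show s + 1 - u - 1 = s - u by omega, show s - (s + 1 - u) = u - 1 by omega]
  ring

/-- `f_{[d_j]}`: the `j`-th component density of PROS sampling with `n` blocks of size `m`,
`d_h = {h m + 1, …, (h + 1) m}` (blocks indexed from `0`), and misplacement matrix `α`. -/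
noncomputable def prosComponentDensity {n : ℕ} (f F : ℝ → ℝ) (m s : ℕ) (α : Fin n → Fin n → ℝ)
    (j : Fin n) (x : ℝ) : ℝ :=
  (1 / (m : ℝ)) * ∑ h : Fin n, ∑ u ∈ Icc ((h : ℕ) * m + 1) (((h : ℕ) + 1) * m),
    α j h * orderStatDensity f F s u x

theorem prosComponentDensity_reflect {n m : ℕ} {f F : ℝ → ℝ} {c : ℝ}
    (hf : ∀ x, f (c - x) = f x) (hF : ∀ x, F (c - x) = 1 - F x)
    {α : Fin n → Fin n → ℝ} (hα : ∀ j h, α j h = α j.rev h.rev) (j : Fin n) (x : ℝ) :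
    prosComponentDensity f F m (n * m) α j x =
      prosComponentDensity f F m (n * m) α j.rev (c - x) := by
  refine congrArg _ (Fintype.sum_equiv Fin.revPerm _ _ fun h ↦ ?_)
  rw [Fin.revPerm_apply]
  have hsplit := h.mul_eq_rev_mul_add_succ_mul m
  have hsucc : ((h : ℕ) + 1) * m = h * m + m := add_one_mul _ _
  have hsucc_rev : ((h.rev : ℕ) + 1) * m = h.rev * m + m := add_one_mul _ _
  have hblock : ((h.rev : ℕ) + 1) * m ≤ n * m := by omega
  calc ∑ u ∈ Icc ((h : ℕ) * m + 1) (((h : ℕ) + 1) * m),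
          α j h * orderStatDensity f F (n * m) u x
      = ∑ u ∈ Icc ((h.rev : ℕ) * m + 1) (((h.rev : ℕ) + 1) * m),
          α j h * orderStatDensity f F (n * m) (n * m + 1 - u) x := by
        rw [sum_Icc_reflect (fun u ↦ α j h * orderStatDensity f F (n * m) u x) hblock]
        congr 2 <;> omega
    _ = _ := by
        refine sum_congr rfl fun u hu ↦ ?_
        rw [Finset.mem_Icc] at hu
        rw [← hα, orderStatDensity_reflect hf hF (by omega) (by omega)]

/-- `Fin.rev` is the 0-based version of `j ↦ n - j + 1`. -/
theorem pros_component_reflection_general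
    (n m s : ℕ) (hs : s = n * m)
    (μ₀ : ℝ) (f F : ℝ → ℝ)
    (hfint : Integrable f)
    (hfnorm : ∫ x, f x = 1)
    (hfsym : ∀ x, f x = f (2 * μ₀ - x))
    (hF : ∀ x, F x = ∫ t in Set.Iic x, f t)
    (α : Fin n → Fin n → ℝ)
    (hαsym : ∀ j h, α j h = α j.rev h.rev)
    (fd : Fin n → ℝ → ℝ)
    (hfd : ∀ j x, fd j x =
      (1 / (m : ℝ)) * ∑ h : Fin n, ∑ u ∈ Finset.Icc (h.1 * m + 1) ((h.1 + 1) * m),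
        α j h * ((s : ℝ) * (Nat.choose (s - 1) (u - 1) : ℝ) *
          F x ^ (u - 1) * (1 - F x) ^ (s - u) * f x)) :
    ∀ j : Fin n, ∀ x, fd j x = fd j.rev (2 * μ₀ - x) := by
  have hf : ∀ x, f (2 * μ₀ - x) = f x := fun x ↦ (hfsym x).symm
  have hFsym : ∀ x, F (2 * μ₀ - x) = 1 - F x := fun x ↦ by
    rw [hF, hF, integral_Iic_sub_left_of_symmetric hfint hf, hfnorm]
  have hfd_eq : fd = prosComponentDensity f F m s α := funext₂ hfd
  subst hs hfd_eq
  exact prosComponentDensity_reflect hf hFsym hαsym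

/-- if f is symmetric about μ₀ and the doubly stochastic
misplacement matrix satisfies α_{j,h} = α_{n-j+1,n-h+1}, then the PROS component
densities satisfy the reflection identity f_{[d_j]}(x) = f_{[d_{n-j+1}]}(2μ₀−x).
(Fin.rev is the 0-based version of j ↦ n-j+1.) -/
theorem pros_component_reflection
    (n m s : ℕ) (hn : 0 < n) (hm : 0 < m) (hs : s = n * m)
    (μ₀ : ℝ) (f F : ℝ → ℝ)
    (hfnn : ∀ x, 0 ≤ f x) (hfint : Integrable f)
    (hfnorm : ∫ x, f x = 1)
    (hfsym : ∀ x, f x = f (2 * μ₀ - x))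
    (hF : ∀ x, F x = ∫ t in Set.Iic x, f t)
    (α : Fin n → Fin n → ℝ)
    (hαnn : ∀ j h, 0 ≤ α j h)
    (hrow : ∀ j, ∑ h, α j h = 1)
    (hcol : ∀ h, ∑ j, α j h = 1)
    (hαsym : ∀ j h, α j h = α j.rev h.rev)
    (fd : Fin n → ℝ → ℝ)
    (hfd : ∀ j x, fd j x =
      (1 / (m : ℝ)) * ∑ h : Fin n, ∑ u ∈ Finset.Icc (h.1 * m + 1) ((h.1 + 1) * m),
        α j h * ((s : ℝ) * (Nat.choose (s - 1) (u - 1) : ℝ) *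
          F x ^ (u - 1) * (1 - F x) ^ (s - u) * f x)) :
    ∀ j : Fin n, ∀ x, fd j x = fd j.rev (2 * μ₀ - x) :=
  pros_component_reflection_general n m s hs μ₀ f F hfint hfnorm hfsym hF α hαsym fd hfd
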